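/- For n ≥ 1 fixed and j ≥ 2, D^n(M_{k,j−2}(q,q̄)) = n!·Q_{j−2}(q,q̄) if k = n, and D^n(M_{k,j−2}(q,q̄)) = 0 if 0 ≤ k < n, where D is the Cauchy–Fueter operator and M_{k,s}(q,q̄) = x_0^k Q_s(q,q̄). -/

import Mathlib

open Quaternion Real MeasureTheory

noncomputable section

/-- The quaternion imaginary unit `i`. -/
def qi : ℍ[ℝ] := ⟨0,1,0,0⟩
/-- The quaternion imaginary unit `j`. -/
def qj : ℍ[ℝ] := ⟨0,0,1,0⟩
/-- The quaternion imaginary unit `k`. -/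
def qk : ℍ[ℝ] := ⟨0,0,0,1⟩

/-- Directional (partial) derivative of `f : ℍ → ℍ` at `q` in direction `v`. -/
def pd (v : ℍ[ℝ]) (f : ℍ[ℝ] → ℍ[ℝ]) (q : ℍ[ℝ]) : ℍ[ℝ] := fderiv ℝ f q v

/-- The Cauchy–Fueter operator `D = ∂_{x₀} + i∂_{x₁} + j∂_{x₂} + k∂_{x₃}`. -/
def Dop (f : ℍ[ℝ] → ℍ[ℝ]) (q : ℍ[ℝ]) : ℍ[ℝ] :=
  pd 1 f q + qi * pd qi f q + qj * pd qj f q + qk * pd qk f q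

/-- The conjugate Cauchy–Fueter operator `D̄ = ∂_{x₀} - i∂_{x₁} - j∂_{x₂} - k∂_{x₃}`. -/
def Dbar (f : ℍ[ℝ] → ℍ[ℝ]) (q : ℍ[ℝ]) : ℍ[ℝ] :=
  pd 1 f q - qi * pd qi f q - qj * pd qj f q - qk * pd qk f q

/-- The 4-dimensional Laplacian `Δ = ∂²_{x₀} + ∂²_{x₁} + ∂²_{x₂} + ∂²_{x₃}`. -/
def qlap (f : ℍ[ℝ] → ℍ[ℝ]) (q : ℍ[ℝ]) : ℍ[ℝ] :=
  pd 1 (pd 1 f) q + pd qi (pd qi f) q + pd qj (pd qj f) q + pd qk (pd qk f) q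

/-- The quaternionic Appell polynomials
`Q_k(q,q̄) = Σ_{j=0}^k (2(k-j+1)/((k+1)(k+2))) q^{k-j} q̄^j`. -/
def Qa (k : ℕ) (q : ℍ[ℝ]) : ℍ[ℝ] :=
  ∑ j ∈ Finset.range (k+1),
    ((2*((k:ℝ)-j+1))/(((k:ℝ)+1)*((k:ℝ)+2))) • (q^(k-j) * (star q)^j)

/-- The generalized Appell polyanalytic polynomials `M_{k,s}(q,q̄) = x₀^k Q_s(q,q̄)`,
where `x₀ = Re q`. -/
def Ma (k s : ℕ) (q : ℍ[ℝ]) : ℍ[ℝ] := q.re ^ k • Qa s q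
/-! The Cauchy–Fueter operator is `D f (q) = Σ_e e · ∂_e f (q)`, summed over the basis
`e ∈ {1, i, j, k}`. The identities `Σ_e e x e = -2 x̄` and `Σ_e e x ē = 2 (x + x̄)` turn
`D (q^a q̄^b)`, via the product rule, into a combination of the monomials `q^t q̄^(a+b-1-t)`
(`q` and `q̄` commute). For the Appell coefficients these combinations cancel, so `D Q_s = 0`.
Since `x₀` is the real part, `D (x₀^k f) = k x₀^(k-1) f + x₀^k D f`, hence
`D M_{k,s} = k M_{k-1,s}` and `D^n M_{k,s} = k (k-1) ⋯ (k-n+1) M_{k-n,s}`, which is `n! Q_s`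
for `k = n` and `0` for `k < n`. -/

open Finset

def diracSum (L : ℍ[ℝ] → ℍ[ℝ]) : ℍ[ℝ] := L 1 + qi * L qi + qj * L qj + qk * L qk

lemma Dop_eq_diracSum (f : ℍ[ℝ] → ℍ[ℝ]) (q : ℍ[ℝ]) : Dop f q = diracSum (pd · f q) := rfl

lemma diracSum_add (L M : ℍ[ℝ] → ℍ[ℝ]) :
    diracSum (fun v => L v + M v) = diracSum L + diracSum M := by
  simp only [diracSum, mul_add]
  abel

lemma diracSum_smul (c : ℝ) (L : ℍ[ℝ] → ℍ[ℝ]) :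
    diracSum (fun v => c • L v) = c • diracSum L := by
  simp only [diracSum, mul_smul_comm, smul_add]

lemma diracSum_sum {ι : Type*} (s : Finset ι) (L : ι → ℍ[ℝ] → ℍ[ℝ]) :
    diracSum (fun v => ∑ i ∈ s, L i v) = ∑ i ∈ s, diracSum (L i) := by
  simp only [diracSum, mul_sum, sum_add_distrib]

lemma diracSum_re_smul (w : ℍ[ℝ]) : diracSum (fun v => v.re • w) = w := by
  simp [diracSum, show qi.re = 0 from rfl, show qj.re = 0 from rfl, show qk.re = 0 from rfl]

lemma diracSum_mul_mul (x y : ℍ[ℝ]) :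
    diracSum (fun v => x * v * y) = -(2 : ℝ) • (star x * y) := by
  have hx : x + qi * x * qi + qj * x * qj + qk * x * qk = -(2 : ℝ) • star x := by
    ext <;> simp <;> simp only [qi, qj, qk] <;> ring
  rw [← smul_mul_assoc, ← hx]
  simp only [diracSum]
  noncomm_ring

lemma diracSum_mul_star_mul (x y : ℍ[ℝ]) :
    diracSum (fun v => x * star v * y) = (2 : ℝ) • ((x + star x) * y) := by
  have hx : x + qi * x * star qi + qj * x * star qj + qk * x * star qk
      = (2 : ℝ) • (x + star x) := by
    ext <;> simp <;> simp only [qi, qj, qk] <;> ring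
  rw [← smul_mul_assoc, ← hx]
  simp only [diracSum, star_one]
  noncomm_ring

-- Mathlib has no such instance; `HasFDerivAt.star` needs it.
instance : StarModule ℝ ℍ[ℝ] where
  star_smul r x := by rw [Quaternion.star_smul, star_trivial r]

def qmon (a b : ℕ) (q : ℍ[ℝ]) : ℍ[ℝ] := q ^ a * star q ^ b

lemma star_qmon (a b : ℕ) (q : ℍ[ℝ]) : star (qmon a b q) = qmon b a q := by
  rw [qmon, qmon, star_mul, star_pow, star_pow, star_star]

lemma qmon_mul_star_pow (a b c : ℕ) (q : ℍ[ℝ]) :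
    qmon a b q * star q ^ c = qmon a (b + c) q := by
  rw [qmon, qmon, mul_assoc, pow_add]

lemma star_pow_mul_qmon (a b c : ℕ) (q : ℍ[ℝ]) :
    star q ^ c * qmon a b q = qmon a (c + b) q := by
  have hq : Commute (star q) q := star_comm_self' q
  rw [qmon, qmon, ← mul_assoc, (hq.pow_pow c a).eq, mul_assoc, pow_add]

lemma differentiable_qmon (a b : ℕ) : Differentiable ℝ (qmon a b) :=
  (differentiable_pow a).mul (differentiable_id.star.pow b)

lemma pd_qmon (a b : ℕ) (v q : ℍ[ℝ]) :
    pd v (qmon a b) q = ∑ i ∈ range a, q ^ (a - 1 - i) * v * qmon i b q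
      + ∑ i ∈ range b, qmon a (b - 1 - i) q * star v * star q ^ i := by
  have h := ((hasFDerivAt_id (𝕜 := ℝ) q).pow' a).mul' ((hasFDerivAt_id (𝕜 := ℝ) q).star.pow' b)
  rw [pd, show qmon a b = id ^ a * (fun x => star (id x)) ^ b from rfl, h.fderiv]
  simp [qmon, mul_sum, sum_mul, mul_assoc, add_comm]

lemma Dop_qmon (a b : ℕ) (q : ℍ[ℝ]) :
    Dop (qmon a b) q = (2 * b : ℝ) • qmon a (b - 1) q
      + (2 : ℝ) • ∑ t ∈ range b, qmon t (a + b - 1 - t) q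
      - (2 : ℝ) • ∑ t ∈ range a, qmon t (a + b - 1 - t) q := by
  have hfirst : ∀ i ∈ range a, -(2 : ℝ) • (star (q ^ (a - 1 - i)) * qmon i b q)
      = -(2 : ℝ) • qmon i (a + b - 1 - i) q := by
    intro i hi
    rw [star_pow, star_pow_mul_qmon, show a - 1 - i + b = a + b - 1 - i by grind]
  have hsecond : ∀ i ∈ range b,
      (2 : ℝ) • ((qmon a (b - 1 - i) q + star (qmon a (b - 1 - i) q)) * star q ^ i)
      = (2 : ℝ) • (qmon a (b - 1) q + qmon (b - 1 - i) (a + b - 1 - (b - 1 - i)) q) := by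
    intro i hi
    rw [star_qmon, add_mul, qmon_mul_star_pow, qmon_mul_star_pow,
      show b - 1 - i + i = b - 1 by grind, show a + i = a + b - 1 - (b - 1 - i) by grind]
  rw [Dop_eq_diracSum]
  simp_rw [pd_qmon]
  rw [diracSum_add, diracSum_sum, diracSum_sum]
  simp_rw [diracSum_mul_mul, diracSum_mul_star_mul]
  rw [sum_congr rfl hfirst, sum_congr rfl hsecond, ← smul_sum, ← smul_sum, sum_add_distrib,
    sum_const, card_range, sum_range_reflect (fun t => qmon t (a + b - 1 - t) q) b]
  module

lemma pd_sum_smul {ι : Type*} (u : Finset ι) (c : ι → ℝ) (f : ι → ℍ[ℝ] → ℍ[ℝ]) (v q : ℍ[ℝ])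
    (hf : ∀ i ∈ u, DifferentiableAt ℝ (f i) q) :
    pd v (fun q => ∑ i ∈ u, c i • f i q) q = ∑ i ∈ u, c i • pd v (f i) q := by
  rw [pd, fderiv_fun_sum (A := fun i q => c i • f i q) fun i hi => (hf i hi).const_smul (c i)]
  simp only [FunLike.coe_sum, Finset.sum_apply]
  refine sum_congr rfl fun i hi => ?_
  rw [fderiv_fun_const_smul (hf i hi), smul_apply, pd]

lemma Dop_sum_smul {ι : Type*} (u : Finset ι) (c : ι → ℝ) (f : ι → ℍ[ℝ] → ℍ[ℝ]) (q : ℍ[ℝ])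
    (hf : ∀ i ∈ u, DifferentiableAt ℝ (f i) q) :
    Dop (fun q => ∑ i ∈ u, c i • f i q) q = ∑ i ∈ u, c i • Dop (f i) q := by
  simp only [Dop_eq_diracSum, pd_sum_smul u c f _ q hf, diracSum_sum, diracSum_smul]

lemma sum_smul_sum_range_eq_sum_Ioc {M : Type*} [AddCommMonoid M] [Module ℝ M]
    (s : ℕ) (d : ℕ → ℝ) (F : ℕ → M) :
    ∑ m ∈ range (s + 1), d m • ∑ t ∈ range m, F t
      = ∑ t ∈ range (s + 1), (∑ m ∈ Ioc t s, d m) • F t := by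
  simp_rw [smul_sum, sum_smul]
  exact sum_comm' fun m t => by simp only [mem_range, mem_Ioc]; omega

lemma sum_range_smul_collect_terms {M : Type*} [AddCommGroup M] [Module ℝ M]
    (s : ℕ) (c : ℕ → ℝ) (F : ℕ → M) :
    ∑ m ∈ range (s + 1), c m • ((2 * m : ℝ) • F (s - m)
        + (2 : ℝ) • ∑ t ∈ range m, F t - (2 : ℝ) • ∑ t ∈ range (s - m), F t)
      = ∑ t ∈ range (s + 1),
          (2 * (s - t : ℕ) * c (s - t) + 2 * ∑ m ∈ Ioc t s, (c m - c (s - m))) • F t := by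
  have hF : ∑ m ∈ range (s + 1), (c m * (2 * m)) • F (s - m)
      = ∑ t ∈ range (s + 1), (2 * (s - t : ℕ) * c (s - t)) • F t := by
    rw [← sum_range_reflect]
    refine sum_congr rfl fun t ht => ?_
    rw [mem_range] at ht
    rw [show s + 1 - 1 - t = s - t by omega, show s - (s - t) = t by omega, mul_comm]
  have hS : ∑ m ∈ range (s + 1), c m • ∑ t ∈ range (s - m), F t
      = ∑ m ∈ range (s + 1), c (s - m) • ∑ t ∈ range m, F t := by
    rw [← sum_range_reflect]
    refine sum_congr rfl fun m hm => ?_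
    rw [mem_range] at hm
    rw [show s + 1 - 1 - m = s - m by omega, show s - (s - m) = m by omega]
  calc _ = ∑ m ∈ range (s + 1), (c m * (2 * m)) • F (s - m)
        + (2 : ℝ) • (∑ m ∈ range (s + 1), c m • ∑ t ∈ range m, F t
          - ∑ m ∈ range (s + 1), c m • ∑ t ∈ range (s - m), F t) := by
        rw [← sum_sub_distrib, smul_sum, ← sum_add_distrib]
        exact sum_congr rfl fun m _ => by module
    _ = ∑ t ∈ range (s + 1), (2 * (s - t : ℕ) * c (s - t)) • F t
        + (2 : ℝ) • ∑ t ∈ range (s + 1), (∑ m ∈ Ioc t s, (c m - c (s - m))) • F t := by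
        simp_rw [hF, hS, ← sum_sub_distrib, ← sub_smul, sum_smul_sum_range_eq_sum_Ioc]
    _ = _ := by
        rw [smul_sum, ← sum_add_distrib]
        exact sum_congr rfl fun t _ => by module

lemma sum_Ioc_sub_two_mul (x : ℝ) {t n : ℕ} (h : t ≤ n) :
    ∑ m ∈ Ioc t n, (x - 2 * m) = (n - t) * (x - n - t - 1) := by
  induction n, h using Nat.le_induction with
  | base => simp
  | succ n hn ih =>
    rw [sum_Ioc_succ_top hn, ih]
    push_cast
    ring

def appellCoeff (s m : ℕ) : ℝ := 2 * ((s : ℝ) - m + 1) / (((s : ℝ) + 1) * ((s : ℝ) + 2))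

lemma Qa_eq_sum_qmon (s : ℕ) :
    Qa s = fun q => ∑ m ∈ range (s + 1), appellCoeff s m • qmon (s - m) m q := rfl

lemma appellCoeff_balance {s t : ℕ} (ht : t ≤ s) :
    2 * (s - t : ℕ) * appellCoeff s (s - t)
      + 2 * ∑ m ∈ Ioc t s, (appellCoeff s m - appellCoeff s (s - m)) = 0 := by
  have hdiff : ∀ m ∈ Ioc t s, appellCoeff s m - appellCoeff s (s - m)
      = 2 / (((s : ℝ) + 1) * ((s : ℝ) + 2)) * (s - 2 * m) := by
    intro m hm
    rw [appellCoeff, appellCoeff, Nat.cast_sub (mem_Ioc.mp hm).2]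
    ring
  rw [sum_congr rfl hdiff, ← mul_sum, sum_Ioc_sub_two_mul _ ht, appellCoeff, Nat.cast_sub ht]
  field_simp
  ring

lemma Dop_sum_smul_qmon (s : ℕ) (c : ℕ → ℝ) (q : ℍ[ℝ]) :
    Dop (fun q => ∑ m ∈ range (s + 1), c m • qmon (s - m) m q) q
      = ∑ t ∈ range (s + 1), (2 * (s - t : ℕ) * c (s - t)
          + 2 * ∑ m ∈ Ioc t s, (c m - c (s - m))) • qmon t (s - 1 - t) q := by
  have hterm : ∀ m ∈ range (s + 1), c m • Dop (qmon (s - m) m) q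
      = c m • ((2 * m : ℝ) • qmon (s - m) (s - 1 - (s - m)) q
        + (2 : ℝ) • ∑ t ∈ range m, qmon t (s - 1 - t) q
        - (2 : ℝ) • ∑ t ∈ range (s - m), qmon t (s - 1 - t) q) := by
    intro m hm
    rw [mem_range] at hm
    rw [Dop_qmon, show s - m + m = s by omega, show m - 1 = s - 1 - (s - m) by omega]
  rw [Dop_sum_smul _ _ _ q fun m _ => (differentiable_qmon _ _).differentiableAt,
    sum_congr rfl hterm, sum_range_smul_collect_terms s c fun t => qmon t (s - 1 - t) q]

lemma Dop_Qa (s : ℕ) (q : ℍ[ℝ]) : Dop (Qa s) q = 0 := by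
  rw [Qa_eq_sum_qmon, Dop_sum_smul_qmon]
  exact sum_eq_zero fun t ht => by
    rw [appellCoeff_balance (Nat.lt_succ_iff.mp (mem_range.mp ht)), zero_smul]

lemma differentiable_Qa (s : ℕ) : Differentiable ℝ (Qa s) := by
  rw [Qa_eq_sum_qmon]
  exact Differentiable.fun_sum fun m _ =>
    ((differentiable_qmon (s - m) m).const_smul (appellCoeff s m) :)

def reCLM : ℍ[ℝ] →L[ℝ] ℝ := ⟨QuaternionAlgebra.reₗ _ _ _, Quaternion.continuous_re⟩

@[simp] lemma reCLM_apply (q : ℍ[ℝ]) : reCLM q = q.re := rfl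

lemma Dop_re_pow_smul (k : ℕ) (f : ℍ[ℝ] → ℍ[ℝ]) (q : ℍ[ℝ]) (hf : DifferentiableAt ℝ f q) :
    Dop (fun q => q.re ^ k • f q) q = (k * q.re ^ (k - 1)) • f q + q.re ^ k • Dop f q := by
  have hre : HasFDerivAt (fun q : ℍ[ℝ] => q.re) reCLM q := reCLM.hasFDerivAt
  have hpd : ∀ v, pd v (fun q => q.re ^ k • f q) q
      = (k * q.re ^ (k - 1)) • (v.re • f q) + q.re ^ k • pd v f q := by
    intro v
    rw [pd, ((hre.pow k).fun_smul hf.hasFDerivAt).fderiv, pd]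
    simp [smul_smul, add_comm, mul_comm]
  simp only [Dop_eq_diracSum, hpd, diracSum_add, diracSum_smul, diracSum_re_smul]

lemma Dop_Ma (k s : ℕ) : Dop (Ma k s) = (k : ℝ) • Ma (k - 1) s := by
  funext q
  rw [show Ma k s = fun q => q.re ^ k • Qa s q from rfl,
    Dop_re_pow_smul k _ q ((differentiable_Qa s) q), Dop_Qa, smul_zero, add_zero]
  simp only [Pi.smul_apply, Ma, smul_smul]

lemma Dop_const_smul (c : ℝ) (f : ℍ[ℝ] → ℍ[ℝ]) : Dop (c • f) = c • Dop f := by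
  funext q
  simp only [Dop, pd, fderiv_const_smul_field, Pi.smul_apply, smul_apply, mul_smul_comm, smul_add]

lemma iterate_Dop_const_smul (c : ℝ) (n : ℕ) (f : ℍ[ℝ] → ℍ[ℝ]) :
    Dop^[n] (c • f) = c • Dop^[n] f :=
  Function.Commute.iterate_left (f := Dop) (g := (c • ·)) (Dop_const_smul c) n f

lemma iterate_Dop_Ma (k s i : ℕ) :
    Dop^[i] (Ma k s) = (k.descFactorial i : ℝ) • Ma (k - i) s := by
  induction i generalizing k with
  | zero => simp
  | succ i ih =>
    rw [Function.iterate_succ_apply, Dop_Ma, iterate_Dop_const_smul, ih, smul_smul]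
    cases k with
    | zero => simp
    | succ k =>
      rw [Nat.succ_descFactorial_succ, Nat.add_sub_cancel, Nat.add_sub_add_right, Nat.cast_mul]

theorem Dop_iter_generalized_appell_general (n j k : ℕ) (hk : k ≤ n)
    (q : ℍ[ℝ]) :
    (Dop^[n] (Ma k (j-2))) q =
      if k = n then (n.factorial : ℝ) • Qa (j-2) q else 0 := by
  rw [iterate_Dop_Ma]
  split_ifs with hkn
  · subst hkn
    simp [Nat.descFactorial_self, Ma]
  · rw [Nat.descFactorial_eq_zero_iff_lt.mpr (by omega)]
    simp

/-- For `n ≥ 1` and `j ≥ 2`: `D^n(M_{k,j−2}) = n!·Q_{j−2}` if `k = n`, and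
`D^n(M_{k,j−2}) = 0` if `0 ≤ k < n`. -/
theorem Dop_iter_generalized_appell (n j k : ℕ) (hn : 1 ≤ n) (hj : 2 ≤ j) (hk : k ≤ n)
    (q : ℍ[ℝ]) :
    (Dop^[n] (Ma k (j-2))) q =
      if k = n then (n.factorial : ℝ) • Qa (j-2) q else 0 :=
  Dop_iter_generalized_appell_general n j k hk q
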